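/- arXiv:2111.06063 — 3 statements merged into one kernel-verified Lean document; each statement's English description precedes it below -/
import Mathlib

section
/- Let Θ̂ ∈ ℝ^{n×n} be symmetric positive semi-definite with smallest eigenvalue λ₀ ≥ 2/C. For the soft-margin objective, with gradient norm squared equal to ‖W‖² + l'(f)ᵀΘ̂ l'(f) + 2fᵀl'(f), where l(f,y) = C·max(0,1-yf) and l'(f,y) = -Cy·𝟙(1-yf>0), one has ‖∇L‖² ≥ 2(L - L*), where L = (1/2)‖W‖² + ∑_i l(f_i, y_i) and L* ≥ 0. Concretely: λ₀∑_i 𝟙(1-y_if_i>0)C² - 2∑_i Cy_if_i𝟙(1-y_if_i>0) - 2∑_i C(1-y_if_i)𝟙(1-y_if_i>0) = C∑_i 𝟙(1-y_if_i>0)(Cλ₀ - 2) ≥ 0. -/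
open scoped RealInnerProductSpace

/-- PL condition for the NN soft margin loss: if the tangent kernel matrix is
symmetric PSD with smallest eigenvalue `lam0 ≥ 2/C`, then `‖∇L‖² ≥ 2(L - L*)`,
and concretely
`lam0 ∑ᵢ 𝟙 C² - 2∑ᵢ C yᵢ fᵢ 𝟙 - 2∑ᵢ C (1 - yᵢfᵢ) 𝟙 = C ∑ᵢ 𝟙 (Clam0 - 2) ≥ 0`. -/
theorem nn_soft_margin_PL
    {H : Type*} [NormedAddCommGroup H] [InnerProductSpace ℝ H]
    (n : ℕ) (Θ : Matrix (Fin n) (Fin n) ℝ) (hsymm : Θ.IsSymm)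
    (lam0 C : ℝ) (hC : 0 < C) (hlam0 : 2 / C ≤ lam0)
    (hpsd : ∀ v : Fin n → ℝ, lam0 * ∑ i, (v i)^2 ≤ ∑ i, ∑ j, v i * Θ i j * v j)
    (f y : Fin n → ℝ) (hy : ∀ i, y i = 1 ∨ y i = -1)
    (ind : Fin n → ℝ) (hind : ∀ i, ind i = if 1 - y i * f i > 0 then 1 else 0)
    (l' : Fin n → ℝ) (hl' : ∀ i, l' i = -C * y i * ind i)
    (W : H) (L Lstar : ℝ) (hLstar : 0 ≤ Lstar)
    (hL : L = (1/2) * ‖W‖^2 + ∑ i, C * max 0 (1 - y i * f i))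
    (gradsq : ℝ)
    (hgradsq : gradsq = ‖W‖^2 + (∑ i, ∑ j, l' i * Θ i j * l' j)
      + 2 * ∑ i, f i * l' i) :
    gradsq ≥ 2 * (L - Lstar)
    ∧ lam0 * ∑ i, ind i * C^2 - 2 * ∑ i, C * y i * f i * ind i
        - 2 * ∑ i, C * (1 - y i * f i) * ind i
      = C * ∑ i, ind i * (C * lam0 - 2)
    ∧ 0 ≤ C * ∑ i, ind i * (C * lam0 - 2) := by
  have hCl : 2 ≤ C * lam0 := by
    rw [div_le_iff₀ hC] at hlam0; linarith
  have hind01 : ∀ i, 0 ≤ ind i := fun i => by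
    rw [hind i]; split <;> norm_num
  have hnn : 0 ≤ C * ∑ i, ind i * (C * lam0 - 2) := by
    refine mul_nonneg hC.le (Finset.sum_nonneg fun i _ => ?_)
    exact mul_nonneg (hind01 i) (by linarith)
  have heq : lam0 * ∑ i, ind i * C^2 - 2 * ∑ i, C * y i * f i * ind i
        - 2 * ∑ i, C * (1 - y i * f i) * ind i
      = C * ∑ i, ind i * (C * lam0 - 2) := by
    rw [Finset.mul_sum, Finset.mul_sum, Finset.mul_sum, Finset.mul_sum,
      ← Finset.sum_sub_distrib, ← Finset.sum_sub_distrib]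
    exact Finset.sum_congr rfl fun i _ => by ring
  refine ⟨?_, heq, hnn⟩
  have hkey : lam0 * ∑ i, (l' i)^2 + 2 * ∑ i, f i * l' i
      - 2 * ∑ i, C * max 0 (1 - y i * f i)
      = C * ∑ i, ind i * (C * lam0 - 2) := by
    rw [Finset.mul_sum, Finset.mul_sum, Finset.mul_sum, Finset.mul_sum,
      ← Finset.sum_add_distrib, ← Finset.sum_sub_distrib]
    refine Finset.sum_congr rfl fun i _ => ?_
    rw [hl' i, hind i]
    by_cases h : 1 - y i * f i > 0
    · rw [if_pos h, max_eq_right h.le]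
      rcases hy i with h1 | h1 <;> rw [h1] <;> ring
    · rw [if_neg h, max_eq_left (by linarith [not_lt.mp h])]
      ring
  have hq := hpsd l'
  rw [hgradsq, hL]
  linarith [hq, hkey, hLstar]
end

section
/- Suppose f : [0,T] → ℝ satisfies df_t/dt = -λf_t - ∑_{i=1}^n l'(f_t(x_i), y_i)·Θ̂_t(x,x_i), and sign(l'(f_t(x_i),y_i)) = sign(l'(f_0(x_i),y_i)) for all t ∈ [0,T]. Then f_T(x) = ∑_i a_i K(x,x_i) + b, with a_i = -sign(l'(f_0(x_i),y_i)), b = e^{-λT}f_0(x), and K(x,x_i) = e^{-λT}∫_0^T |l'(f_t(x_i),y_i)|·Θ̂_t(x,x_i)·e^{λt} dt. -/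
/-!
Multiplying the dynamics by the integrating factor `e^{λt}` turns them into
`d/dt (e^{λt} f_t(x)) = -e^{λt} ∑ᵢ l'(f_t(xᵢ), yᵢ) Θ̂_t(x, xᵢ)`, so the fundamental theorem of
calculus expresses `f_T(x)` through `f_0(x)` and an integral over `[0, T]`. On that interval the
sign of each `l'(f_t(xᵢ), yᵢ)` is frozen at its value at `t = 0`, so it can be pulled out of the
integral, leaving `|l'(f_t(xᵢ), yᵢ)|` inside.
-/

open intervalIntegral MeasureTheory Set

theorem Real.sign_mul_abs (r : ℝ) : Real.sign r * |r| = r := by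
  rcases lt_trichotomy r 0 with h | rfl | h
  · rw [Real.sign_of_neg h, abs_of_neg h, neg_one_mul, neg_neg]
  · simp
  · rw [Real.sign_of_pos h, abs_of_pos h, one_mul]

theorem Real.eq_sign_mul_abs_of_sign_eq {a b : ℝ} (h : Real.sign a = Real.sign b) :
    a = Real.sign b * |a| := by
  rw [← h, Real.sign_mul_abs]

theorem eq_exp_mul_sub_integral_of_hasDerivAt {f g : ℝ → ℝ} {lam T : ℝ}
    (hf : ∀ t ∈ uIcc 0 T, HasDerivAt f (-(lam * f t) - g t) t)
    (hg : IntervalIntegrable (fun t => g t * Real.exp (lam * t)) volume 0 T) :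
    f T = Real.exp (-(lam * T)) * (f 0 - ∫ t in (0 : ℝ)..T, g t * Real.exp (lam * t)) := by
  have hexp (t : ℝ) : HasDerivAt (fun u => Real.exp (lam * u)) (Real.exp (lam * t) * lam) t := by
    simpa using ((hasDerivAt_id t).const_mul lam).exp
  have hftc : ∫ t in (0 : ℝ)..T, -(g t * Real.exp (lam * t)) =
      Real.exp (lam * T) * f T - Real.exp (lam * 0) * f 0 :=
    integral_eq_sub_of_hasDerivAt (f := fun t => Real.exp (lam * t) * f t)
      (fun t ht => ((hexp t).mul (hf t ht)).congr_deriv (by ring)) hg.neg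
  rw [intervalIntegral.integral_neg, mul_zero, Real.exp_zero, one_mul, neg_eq_iff_eq_neg] at hftc
  rw [hftc, sub_neg_eq_add, add_sub_cancel, ← mul_assoc, ← Real.exp_add, neg_add_cancel,
    Real.exp_zero, one_mul]

theorem nn_is_kernel_machine_general
    {X : Type*} (n : ℕ) (xs : Fin n → X) (ys : Fin n → ℝ)
    (lam T : ℝ) (hT : 0 ≤ T)
    (F : ℝ → X → ℝ) (l' : ℝ → ℝ → ℝ) (Θ : ℝ → X → X → ℝ)
    (habs_cont : ∀ x i, Continuous (fun t =>
      |l' (F t (xs i)) (ys i)| * Θ t x (xs i)))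
    (hdyn : ∀ (t : ℝ) (x : X), HasDerivAt (fun s => F s x)
      (-(lam * F t x) - ∑ i, l' (F t (xs i)) (ys i) * Θ t x (xs i)) t)
    (hsign : ∀ t ∈ Set.Icc (0:ℝ) T, ∀ i,
      Real.sign (l' (F t (xs i)) (ys i)) = Real.sign (l' (F 0 (xs i)) (ys i))) :
    ∀ x : X,
      F T x = (∑ i, (-(Real.sign (l' (F 0 (xs i)) (ys i)))) *
          (Real.exp (-(lam * T)) *
            ∫ t in (0:ℝ)..T,
              |l' (F t (xs i)) (ys i)| * Θ t x (xs i) * Real.exp (lam * t)))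
        + Real.exp (-(lam * T)) * F 0 x := by
  intro x
  set s : Fin n → ℝ := fun i => Real.sign (l' (F 0 (xs i)) (ys i))
  set k : Fin n → ℝ → ℝ := fun i t => |l' (F t (xs i)) (ys i)| * Θ t x (xs i) * Real.exp (lam * t)
  have hk (i : Fin n) : Continuous (k i) := (habs_cont x i).mul (by fun_prop)
  have hsplit : EqOn (fun t => (∑ i, l' (F t (xs i)) (ys i) * Θ t x (xs i)) * Real.exp (lam * t))
      (fun t => ∑ i, s i * k i t) (uIcc 0 T) := fun t ht => by
    rw [uIcc_of_le hT] at ht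
    simp only [Finset.sum_mul]
    refine Finset.sum_congr rfl fun i _ => ?_
    rw [Real.eq_sign_mul_abs_of_sign_eq (hsign t ht i)]
    ring
  have hint : ∫ t in (0 : ℝ)..T, ∑ i, s i * k i t = ∑ i, s i * ∫ t in (0 : ℝ)..T, k i t := by
    rw [integral_finsetSum fun i _ => ((hk i).const_mul (s i)).intervalIntegrable 0 T]
    simp only [intervalIntegral.integral_const_mul]
  have hg : IntervalIntegrable
      (fun t => (∑ i, l' (F t (xs i)) (ys i) * Θ t x (xs i)) * Real.exp (lam * t))
      volume 0 T :=
    (intervalIntegrable_congr (hsplit.mono uIoc_subset_uIcc)).mpr <|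
      (continuous_finsetSum _ fun i _ => continuous_const.mul (hk i)).intervalIntegrable 0 T
  rw [eq_exp_mul_sub_integral_of_hasDerivAt (fun t _ => hdyn t x) hg, integral_congr hsplit, hint,
    mul_sub, Finset.mul_sum, sub_eq_neg_add, ← Finset.sum_neg_distrib]
  congr 1
  exact Finset.sum_congr rfl fun i _ => by ring

/-- Every model trained by gradient flow on an `ℓ₂` regularized loss is a
kernel machine: `f_T(x) = ∑ᵢ aᵢ K(x, xᵢ) + b` with
`aᵢ = -sign(l'(f₀(xᵢ), yᵢ))`, `b = e^{-λT} f₀(x)` and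
`K(x, xᵢ) = e^{-λT} ∫₀ᵀ |l'(f_t(xᵢ), yᵢ)| Θ̂_t(x, xᵢ) e^{λt} dt`. -/
theorem nn_is_kernel_machine
    {X : Type*} (n : ℕ) (xs : Fin n → X) (ys : Fin n → ℝ)
    (lam T : ℝ) (hT : 0 ≤ T)
    (F : ℝ → X → ℝ) (l' : ℝ → ℝ → ℝ) (Θ : ℝ → X → X → ℝ)
    (hcont : ∀ x, Continuous (fun t =>
      ∑ i, l' (F t (xs i)) (ys i) * Θ t x (xs i)))
    (habs_cont : ∀ x i, Continuous (fun t =>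
      |l' (F t (xs i)) (ys i)| * Θ t x (xs i)))
    (hdyn : ∀ (t : ℝ) (x : X), HasDerivAt (fun s => F s x)
      (-(lam * F t x) - ∑ i, l' (F t (xs i)) (ys i) * Θ t x (xs i)) t)
    (hsign : ∀ t ∈ Set.Icc (0:ℝ) T, ∀ i,
      Real.sign (l' (F t (xs i)) (ys i)) = Real.sign (l' (F 0 (xs i)) (ys i))) :
    ∀ x : X,
      F T x = (∑ i, (-(Real.sign (l' (F 0 (xs i)) (ys i)))) *
          (Real.exp (-(lam * T)) *
            ∫ t in (0:ℝ)..T,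
              |l' (F t (xs i)) (ys i)| * Θ t x (xs i) * Real.exp (lam * t)))
        + Real.exp (-(lam * T)) * F 0 x :=
  nn_is_kernel_machine_general n xs ys lam T hT F l' Θ habs_cont hdyn hsign
end

section
/- If a function's Hessian satisfies ‖H(w)‖ < ε for all w in a ball B(w₀; R), then the tangent kernel Θ̂(w; x, x') = ⟨∇_w f(w,x), ∇_w f(w,x')⟩ satisfies |Θ̂(w; x, x') - Θ̂(w₀; x, x')| ≤ C·εR for all w ∈ B(w₀;R), where C depends on sup norms of gradients: specifically |Θ̂(w;x,x') - Θ̂(w₀;x,x')| ≤ εR(‖∇f(w₀,x)‖ + ‖∇f(w₀,x')‖ + 2εR). -/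
open scoped RealInnerProductSpace

/-- Small Hessian norm implies small change of the tangent kernel:
if `‖H_x(w)‖ ≤ ε` on the ball `B(w₀; R)`, then
`|Θ̂(w; x, x') - Θ̂(w₀; x, x')| ≤ εR(‖∇f(w₀,x)‖ + ‖∇f(w₀,x')‖ + 2εR)`. -/
theorem tangent_kernel_change_of_small_hessian
    {E : Type*} [NormedAddCommGroup E] [InnerProductSpace ℝ E] [CompleteSpace E]
    {X : Type*} (f : E → X → ℝ)
    (G : E → X → E)  -- gradient in the parameters
    (H : E → X → (E →L[ℝ] E))  -- Hessian in the parameters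
    (w₀ : E) (R ε : ℝ) (hR : 0 < R) (hε : 0 ≤ ε)
    (hgrad : ∀ (x : X), ∀ w ∈ Metric.closedBall w₀ R,
      HasGradientAt (fun v => f v x) (G w x) w)
    (hHess : ∀ (x : X), ∀ w ∈ Metric.closedBall w₀ R,
      HasFDerivAt (fun v => G v x) (H w x) w ∧ ‖H w x‖ ≤ ε)
    (Θ : E → X → X → ℝ) (hΘ : ∀ w x x', Θ w x x' = ⟪G w x, G w x'⟫) :
    ∀ (x x' : X), ∀ w ∈ Metric.closedBall w₀ R,
      |Θ w x x' - Θ w₀ x x'| ≤ ε * R * (‖G w₀ x‖ + ‖G w₀ x'‖ + 2 * ε * R) := by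

  intro x x' w hw
  have hw0 : w₀ ∈ Metric.closedBall w₀ R := Metric.mem_closedBall_self hR.le
  -- Lipschitz bound for G on the ball
  have key : ∀ y : X, ‖G w y - G w₀ y‖ ≤ ε * R := by
    intro y
    have hderiv : ∀ v ∈ Metric.closedBall w₀ R,
        HasFDerivWithinAt (fun u => G u y) (H v y) (Metric.closedBall w₀ R) v :=
      fun v hv => ((hHess y v hv).1).hasFDerivWithinAt
    have hle := (convex_closedBall w₀ R).norm_image_sub_le_of_norm_hasFDerivWithin_le
      hderiv (fun v hv => (hHess y v hv).2) hw0 hw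
    calc ‖G w y - G w₀ y‖ ≤ ε * ‖w - w₀‖ := hle
      _ ≤ ε * R := by
          have := Metric.mem_closedBall.mp hw
          rw [dist_eq_norm] at this
          exact mul_le_mul_of_nonneg_left this hε
  have hx := key x
  have hx' := key x'
  have hGx' : ‖G w x'‖ ≤ ‖G w₀ x'‖ + ε * R := by
    calc ‖G w x'‖ = ‖G w₀ x' + (G w x' - G w₀ x')‖ := by rw [add_sub_cancel]
      _ ≤ ‖G w₀ x'‖ + ‖G w x' - G w₀ x'‖ := norm_add_le _ _
      _ ≤ ‖G w₀ x'‖ + ε * R := by linarith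
  have hsplit : Θ w x x' - Θ w₀ x x'
      = ⟪G w x - G w₀ x, G w x'⟫ + ⟪G w₀ x, G w x' - G w₀ x'⟫ := by
    rw [hΘ, hΘ, inner_sub_left, inner_sub_right]; ring
  have h1 : |⟪G w x - G w₀ x, G w x'⟫| ≤ ε * R * (‖G w₀ x'‖ + ε * R) := by
    calc |⟪G w x - G w₀ x, G w x'⟫| ≤ ‖G w x - G w₀ x‖ * ‖G w x'‖ :=
        abs_real_inner_le_norm _ _
      _ ≤ ε * R * (‖G w₀ x'‖ + ε * R) := by
          apply mul_le_mul hx hGx' (norm_nonneg _) (by positivity)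
  have h2 : |⟪G w₀ x, G w x' - G w₀ x'⟫| ≤ ‖G w₀ x‖ * (ε * R) := by
    calc |⟪G w₀ x, G w x' - G w₀ x'⟫| ≤ ‖G w₀ x‖ * ‖G w x' - G w₀ x'‖ :=
        abs_real_inner_le_norm _ _
      _ ≤ ‖G w₀ x‖ * (ε * R) := mul_le_mul_of_nonneg_left hx' (norm_nonneg _)
  rw [hsplit]
  calc |⟪G w x - G w₀ x, G w x'⟫ + ⟪G w₀ x, G w x' - G w₀ x'⟫|
      ≤ |⟪G w x - G w₀ x, G w x'⟫| + |⟪G w₀ x, G w x' - G w₀ x'⟫| := abs_add_le _ _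
    _ ≤ ε * R * (‖G w₀ x'‖ + ε * R) + ‖G w₀ x‖ * (ε * R) := add_le_add h1 h2
    _ ≤ ε * R * (‖G w₀ x‖ + ‖G w₀ x'‖ + 2 * ε * R) := by nlinarith [norm_nonneg (G w₀ x), mul_nonneg hε hR.le, mul_nonneg (mul_nonneg hε hR.le) (mul_nonneg hε hR.le)]
end
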